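/- Let φ : G → Fin k be a perfect coloring of H with parameter matrix A such that φ((y·z)·(y·z)·v) = φ(v) for every v ∈ X. Then for every u ∈ G the map ψ : G → Fin k defined by ψ(v) = φ(y·z·v) if v ∈ u·X and ψ(v) = φ(v) if v ∉ u·X is again a perfect coloring of H with the same parameter matrix A. -/

import Mathlib

namespace HexGrid

/-- Relations of the hexagonal grid group: x² = y² = z² = (x·y·z)² = 1. -/
def hexRels : Set (FreeGroup (Fin 3)) :=
  {FreeGroup.of 0 * FreeGroup.of 0,
   FreeGroup.of 1 * FreeGroup.of 1,
   FreeGroup.of 2 * FreeGroup.of 2,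
   FreeGroup.of 0 * FreeGroup.of 1 * FreeGroup.of 2 *
     (FreeGroup.of 0 * FreeGroup.of 1 * FreeGroup.of 2)}

/-- The group `G = ⟨x, y, z ∣ x² = y² = z² = (x·y·z)² = 1⟩`. -/
abbrev G := PresentedGroup hexRels

/-- The generators of `G`. -/
def gen (i : Fin 3) : G := PresentedGroup.of i

def x : G := gen 0
def y : G := gen 1
def z : G := gen 2

lemma gen_mul_self (i : Fin 3) : gen i * gen i = 1 := by
  have h : FreeGroup.of i * FreeGroup.of i ∈ Subgroup.normalClosure hexRels :=
    Subgroup.subset_normalClosure (by fin_cases i <;> simp [hexRels])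
  exact (QuotientGroup.eq_one_iff _).mpr h

/-- The infinite hexagonal grid `H`: the Cayley graph of `G` with respect to `{x, y, z}`;
`u` and `v` are adjacent iff `v ∈ {u·x, u·y, u·z}`. -/
def H : SimpleGraph G where
  Adj u v := u ≠ v ∧ ∃ i : Fin 3, v = u * gen i
  symm := by
    constructor
    rintro u v ⟨hne, i, rfl⟩
    exact ⟨hne.symm, i, by rw [mul_assoc, gen_mul_self, mul_one]⟩
  loopless := by constructor; rintro u ⟨hne, -⟩; exact hne rfl

/-- `φ` is a perfect coloring of `H` with parameter matrix `A`: for every vertex `u` and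
every color `j`, the number of neighbors of `u` in `H` colored `j` equals `A (φ u) j`. -/
def IsPerfectColoring {k : ℕ} (φ : G → Fin k) (A : Matrix (Fin k) (Fin k) ℕ) : Prop :=
  ∀ u : G, ∀ j : Fin k, Set.ncard {v : G | H.Adj u v ∧ φ v = j} = A (φ u) j

/-- A matrix is tridiagonal if its entries vanish whenever the indices differ by more
than one. -/
def IsTridiagonal {k : ℕ} (A : Matrix (Fin k) (Fin k) ℕ) : Prop :=
  ∀ i j : Fin k, ((i : ℕ) + 1 < (j : ℕ) ∨ (j : ℕ) + 1 < (i : ℕ)) → A i j = 0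

/-- Two colorings are equivalent if one is obtained from the other by composing with a
graph automorphism of `H`. -/
def EquivColoring {k : ℕ} (φ ψ : G → Fin k) : Prop :=
  ∃ g : H ≃g H, ψ = fun v => φ (g v)

/-- The double (zigzag) line `X = {(y·z)ⁿ : n ∈ ℤ} ∪ {(y·z)ⁿ·x : n ∈ ℤ}`. -/
def Xline : Set G := {g : G | ∃ n : ℤ, g = (y * z) ^ n ∨ g = (y * z) ^ n * x}

/-!
Write `b = y·z`. Conjugation by a generator inverts `b`, so every `w` satisfies `b·w = w·b^{±1}`.
Call the row through `g` the sequence `n ↦ φ(g·bⁿ)`; the coset `g·X` is the union of the rows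
through `g` and `g·x`, and the hypothesis says both rows of `X` are 2-periodic.

Periodicity spreads from the rows of `g·X` to those of `g·y·X`: the neighbours of `g·b⁻ⁿ` outside
its coset are the consecutive vertices `g·y·bⁿ`, `g·y·bⁿ⁺¹` of one row, so perfectness makes the
multiset of consecutive pairs of that row 2-periodic, and such a sequence is itself 2-periodic;
the remaining row follows by cancelling known colours in the same way. Since the generators connect
all cosets, `φ(v·b²) = φ(v)` for every `v`. Then `{φ(b·w·y), φ(b·w·z)} = {φ(w·y), φ(w·z)}` for
every `w`, and since `w·x` lies in the coset of `w` while `w·y`, `w·z` lie together in another one,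
`ψ` shows around each vertex the same colours as `φ` around a vertex of the same colour.
-/

theorem _root_.Multiset.pair_eq_pair_iff {β : Type*} {a b c d : β} :
    ({a, b} : Multiset β) = {c, d} ↔ a = c ∧ b = d ∨ a = d ∧ b = c := by
  refine ⟨fun h => ?_, ?_⟩
  · rcases Multiset.cons_eq_cons.mp h with ⟨hac, hbd⟩ | ⟨-, s, hb, hd⟩
    · exact Or.inl ⟨hac, Multiset.singleton_inj.mp hbd⟩
    · obtain ⟨hbc, rfl⟩ := (Multiset.singleton_eq_cons_iff _).mp hb
      exact Or.inr ⟨(Multiset.singleton_inj.mp hd).symm, hbc⟩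
  · rintro (⟨rfl, rfl⟩ | ⟨rfl, rfl⟩)
    · rfl
    · exact Multiset.pair_comm _ _

lemma periodic_of_periodic_pair {β : Type*} {c : ℤ → β}
    (h : Function.Periodic (fun m => ({c m, c (m + 1)} : Multiset β)) 2) :
    Function.Periodic c 2 := by
  intro m
  have h₀ := h m
  have h₁ := h (m + 1)
  simp only [add_assoc, Int.reduceAdd] at h₀ h₁
  rcases Multiset.pair_eq_pair_iff.mp h₀ with ⟨h2, -⟩ | ⟨h21, h30⟩
  · exact h2
  rcases Multiset.pair_eq_pair_iff.mp h₁ with ⟨h31, -⟩ | ⟨h32, -⟩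
  · exact h21.trans (h31.symm.trans h30)
  · exact h32.symm.trans h30

lemma gen_inv (i : Fin 3) : (gen i)⁻¹ = gen i :=
  inv_eq_of_mul_eq_one_right (gen_mul_self i)

lemma gen_mul_gen_mul (i : Fin 3) (g : G) : gen i * (gen i * g) = g := by
  rw [← mul_assoc, gen_mul_self, one_mul]

lemma x_mul_x : x * x = 1 := gen_mul_self 0
lemma y_mul_y : y * y = 1 := gen_mul_self 1
lemma z_mul_z : z * z = 1 := gen_mul_self 2
lemma x_inv : x⁻¹ = x := gen_inv 0
lemma y_inv : y⁻¹ = y := gen_inv 1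
lemma z_inv : z⁻¹ = z := gen_inv 2
lemma y_mul_y_mul (g : G) : y * (y * g) = g := gen_mul_gen_mul 1 g
lemma z_mul_z_mul (g : G) : z * (z * g) = g := gen_mul_gen_mul 2 g

lemma xyz_mul_xyz : x * y * z * (x * y * z) = 1 :=
  PresentedGroup.one_of_mem (by simp [hexRels])

lemma gen_mul_yz_mul_gen (i : Fin 3) : gen i * (y * z) * gen i = (y * z)⁻¹ := by
  refine eq_inv_of_mul_eq_one_left ?_
  fin_cases i
  · change x * (y * z) * x * (y * z) = 1
    simpa only [mul_assoc] using xyz_mul_xyz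
  · change y * (y * z) * y * (y * z) = 1
    simp only [mul_assoc, y_mul_y_mul, z_mul_z]
  · change z * (y * z) * z * (y * z) = 1
    simp only [mul_assoc, y_mul_y_mul, one_mul, z_mul_z]

lemma gen_mul_yz_zpow (i : Fin 3) (n : ℤ) : gen i * (y * z) ^ n = (y * z) ^ (-n) * gen i := by
  have h : gen i * (y * z) ^ n * (gen i)⁻¹ = (y * z) ^ (-n) := by
    rw [← conj_zpow, gen_inv, gen_mul_yz_mul_gen, zpow_neg, inv_zpow]
  rw [← h, gen_inv, mul_assoc _ (gen i), gen_mul_self, mul_one]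

theorem mul_gen_induction {P : G → Prop} (one : P 1) (mul_gen : ∀ g i, P g → P (g * gen i))
    (g : G) : P g := by
  have hg : g ∈ Subgroup.closure (Set.range gen) :=
    PresentedGroup.closure_range_of hexRels ▸ Subgroup.mem_top g
  induction hg using Subgroup.closure_induction_right with
  | one => exact one
  | mul_right g _ s hs ih => obtain ⟨i, rfl⟩ := hs; exact mul_gen g i ih
  | mul_inv_cancel g _ s hs ih => obtain ⟨i, rfl⟩ := hs; rw [gen_inv]; exact mul_gen g i ih

lemma yz_mul_eq (w : G) : y * z * w = w * (y * z) ∨ y * z * w = w * (y * z)⁻¹ := by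
  induction w using mul_gen_induction with
  | one => simp
  | mul_gen g i ih =>
    rw [← mul_assoc]
    rcases ih with h | h
    · right
      rw [h, ← gen_mul_yz_mul_gen i]
      simp only [mul_assoc, gen_mul_gen_mul]
    · left
      rw [h, ← gen_mul_yz_mul_gen i]
      simp only [mul_assoc, gen_mul_self, mul_one]

lemma exists_mul_self_of_mem_hexRels {r : FreeGroup (Fin 3)} (hr : r ∈ hexRels) :
    ∃ w, r = w * w := by
  simp only [hexRels, Set.mem_insert_iff, Set.mem_singleton_iff] at hr
  rcases hr with rfl | rfl | rfl | rfl <;> exact ⟨_, rfl⟩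

/-- Every relator is a square, so any assignment of signs to the generators extends. -/
def signHom (f : Fin 3 → ℤˣ) : G →* ℤˣ :=
  PresentedGroup.toGroup (f := f) fun _ hr => by
    obtain ⟨w, rfl⟩ := exists_mul_self_of_mem_hexRels hr
    rw [map_mul, Int.units_mul_self]

@[simp] lemma signHom_gen (f : Fin 3 → ℤˣ) (i : Fin 3) : signHom f (gen i) = f i :=
  PresentedGroup.toGroup.of _

lemma gen_injective : Function.Injective gen := by
  intro i j h
  by_contra hij
  simpa [Ne.symm hij] using congrArg (signHom fun l => if l = i then -1 else 1) h

lemma gen_ne_one (i : Fin 3) : gen i ≠ 1 := by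
  intro h
  simpa using congrArg (signHom fun _ => -1) h

lemma x_mul_yz_zpow (n : ℤ) : x * (y * z) ^ n = (y * z) ^ (-n) * x := gen_mul_yz_zpow 0 n
lemma y_mul_yz_zpow (n : ℤ) : y * (y * z) ^ n = (y * z) ^ (-n) * y := gen_mul_yz_zpow 1 n

def xlineSubgroup : Subgroup G where
  carrier := Xline
  one_mem' := ⟨0, Or.inl (zpow_zero _).symm⟩
  mul_mem' := by
    rintro _ _ ⟨m, rfl | rfl⟩ ⟨n, rfl | rfl⟩
    · exact ⟨m + n, Or.inl (zpow_add _ _ _).symm⟩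
    · exact ⟨m + n, Or.inr (by rw [zpow_add, mul_assoc])⟩
    · refine ⟨m - n, Or.inr ?_⟩
      rw [mul_assoc, x_mul_yz_zpow, ← mul_assoc, ← zpow_add, sub_eq_add_neg]
    · refine ⟨m - n, Or.inl ?_⟩
      rw [mul_assoc, ← mul_assoc x, x_mul_yz_zpow, mul_assoc, x_mul_x, mul_one, ← zpow_add,
        sub_eq_add_neg]
  inv_mem' := by
    rintro _ ⟨n, rfl | rfl⟩
    · exact ⟨-n, Or.inl (zpow_neg _ _).symm⟩
    · exact ⟨n, Or.inr (by rw [mul_inv_rev, x_inv, ← zpow_neg, x_mul_yz_zpow, neg_neg])⟩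

lemma x_mem_xlineSubgroup : x ∈ xlineSubgroup := ⟨0, Or.inr (by rw [zpow_zero, one_mul])⟩
lemma yz_mem_xlineSubgroup : y * z ∈ xlineSubgroup := ⟨1, Or.inl (zpow_one _).symm⟩

lemma y_not_mem_xlineSubgroup : y ∉ xlineSubgroup := by
  let δ := signHom ![1, -1, -1]
  have hδ : ∀ t ∈ xlineSubgroup, δ t = 1 := by
    rintro _ ⟨n, rfl | rfl⟩ <;> simp [δ, x, y, z]
  intro hy
  simpa [δ, y] using hδ y hy

lemma mem_image_mul_xline {u w : G} :
    w ∈ (fun t => u * t) '' Xline ↔ u⁻¹ * w ∈ xlineSubgroup :=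
  mem_leftCoset_iff u

lemma mul_mem_image_mul_xline_iff {u w s : G} (hs : s ∈ xlineSubgroup) :
    w * s ∈ (fun t => u * t) '' Xline ↔ w ∈ (fun t => u * t) '' Xline := by
  simp only [mem_image_mul_xline, ← mul_assoc, Subgroup.mul_mem_cancel_right _ hs]

lemma mul_z_mem_image_mul_xline_iff {u w : G} :
    w * z ∈ (fun t => u * t) '' Xline ↔ w * y ∈ (fun t => u * t) '' Xline := by
  rw [← mul_mem_image_mul_xline_iff (w := w * y) yz_mem_xlineSubgroup, mul_assoc, y_mul_y_mul]

lemma mul_y_not_mem_image_mul_xline {u w : G} (hw : w ∈ (fun t => u * t) '' Xline) :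
    w * y ∉ (fun t => u * t) '' Xline := by
  rw [mem_image_mul_xline] at hw ⊢
  intro hwy
  apply y_not_mem_xlineSubgroup
  simpa [mul_assoc] using mul_mem (inv_mem hw) hwy

lemma x_ne_y : x ≠ y := gen_injective.ne (by decide)
lemma x_ne_z : x ≠ z := gen_injective.ne (by decide)
lemma y_ne_z : y ≠ z := gen_injective.ne (by decide)

section Counting

variable {α : Type*}

def neighborColors (χ : G → α) (w : G) : Multiset α := {χ (w * x), χ (w * y), χ (w * z)}

lemma adj_iff {w v : G} : H.Adj w v ↔ v = w * x ∨ v = w * y ∨ v = w * z := by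
  constructor
  · rintro ⟨-, i, rfl⟩
    fin_cases i <;> simp [x, y, z]
  · rintro (rfl | rfl | rfl) <;>
      exact ⟨fun h => gen_ne_one _ (left_eq_mul.mp h), _, rfl⟩

lemma ncard_adj_and_eq [DecidableEq α] (χ : G → α) (w : G) (j : α) :
    {v | H.Adj w v ∧ χ v = j}.ncard = (neighborColors χ w).count j := by
  classical
  have hset : {v | H.Adj w v ∧ χ v = j} =
      ↑(({w * x, w * y, w * z} : Finset G).filter (χ · = j)) := by
    ext v
    simp only [Set.mem_ofPred_eq, adj_iff, Finset.coe_filter, Finset.mem_insert,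
      Finset.mem_singleton]
  rw [hset, Set.ncard_coe_finset, Finset.card_filter, Finset.sum_insert (by simp [x_ne_y, x_ne_z]),
    Finset.sum_insert (by simp [y_ne_z]), Finset.sum_singleton]
  simp only [neighborColors, Multiset.insert_eq_cons, Multiset.count_cons,
    Multiset.count_singleton, eq_comm (a := j)]
  ring

end Counting

section RowPeriodic

variable {α : Type*}

def RowPeriodic (χ : G → α) (g : G) : Prop :=
  Function.Periodic (fun n : ℤ => χ (g * (y * z) ^ n)) 2

lemma RowPeriodic.add_two_eq {χ : G → α} {g : G} (h : RowPeriodic χ g) (n : ℤ) :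
    χ (g * (y * z) ^ (n + 2)) = χ (g * (y * z) ^ n) :=
  h n

lemma RowPeriodic.mul_yz_zpow {χ : G → α} {g : G} (h : RowPeriodic χ g) (m : ℤ) :
    RowPeriodic χ (g * (y * z) ^ m) := by
  simpa only [RowPeriodic, mul_assoc, ← zpow_add] using h.const_add m

lemma neighborColors_mul_yz_zpow_neg (χ : G → α) (g : G) (n : ℤ) :
    neighborColors χ (g * (y * z) ^ (-n)) =
      {χ (g * x * (y * z) ^ n), χ (g * y * (y * z) ^ n), χ (g * y * (y * z) ^ (n + 1))} := by
  have hz : (y * z) ^ (-n) * z = y * (y * z) ^ (n + 1) := by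
    rw [y_mul_yz_zpow, neg_add', zpow_sub_one, mul_assoc, mul_inv_rev, mul_assoc,
      y_inv, y_mul_y, mul_one, z_inv]
  simp only [neighborColors, mul_assoc, ← x_mul_yz_zpow, ← y_mul_yz_zpow, hz]

end RowPeriodic

section Coloring

variable {k : ℕ} {φ ψ : G → Fin k} {A : Matrix (Fin k) (Fin k) ℕ}

lemma isPerfectColoring_iff :
    IsPerfectColoring φ A ↔ ∀ w j, (neighborColors φ w).count j = A (φ w) j := by
  simp only [IsPerfectColoring, ncard_adj_and_eq]

lemma IsPerfectColoring.neighborColors_eq (hφ : IsPerfectColoring φ A) {w w' : G}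
    (h : φ w = φ w') : neighborColors φ w = neighborColors φ w' :=
  Multiset.ext.mpr fun j => by
    rw [isPerfectColoring_iff.mp hφ w j, isPerfectColoring_iff.mp hφ w' j, h]

lemma IsPerfectColoring.of_neighborColors (hφ : IsPerfectColoring φ A)
    (h : ∀ w, ∃ w', ψ w = φ w' ∧ neighborColors ψ w = neighborColors φ w') :
    IsPerfectColoring ψ A := by
  rw [isPerfectColoring_iff] at hφ ⊢
  intro w j
  obtain ⟨w', hw, hn⟩ := h w
  rw [hw, hn, hφ]

lemma IsPerfectColoring.neighborColors_shift_eq (hφ : IsPerfectColoring φ A)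
    {g : G} (h : RowPeriodic φ g) (n : ℤ) :
    neighborColors φ (g * (y * z) ^ (-(n + 2))) = neighborColors φ (g * (y * z) ^ (-n)) :=
  hφ.neighborColors_eq (by simpa only [show -(n + 2) + 2 = -n by ring] using (h (-(n + 2))).symm)

lemma RowPeriodic.mul_y (hφ : IsPerfectColoring φ A) {g : G} (h : RowPeriodic φ g)
    (hx : RowPeriodic φ (g * x)) : RowPeriodic φ (g * y) := by
  refine periodic_of_periodic_pair fun n => ?_
  beta_reduce
  have hn := hφ.neighborColors_shift_eq h n
  rw [neighborColors_mul_yz_zpow_neg, neighborColors_mul_yz_zpow_neg, hx.add_two_eq n] at hn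
  exact (Multiset.cons_inj_right _).mp hn

lemma RowPeriodic.mul_x (hφ : IsPerfectColoring φ A) {g : G} (h : RowPeriodic φ g)
    (hy : RowPeriodic φ (g * y)) : RowPeriodic φ (g * x) := by
  intro n
  beta_reduce
  have hn := hφ.neighborColors_shift_eq h n
  rw [neighborColors_mul_yz_zpow_neg, neighborColors_mul_yz_zpow_neg, hy.add_two_eq n,
    show n + 2 + 1 = n + 1 + 2 by ring, hy.add_two_eq (n + 1)] at hn
  exact (Multiset.cons_inj_left _).mp hn

lemma rowPeriodic_one (hX : ∀ v ∈ Xline, φ ((y * z) * (y * z) * v) = φ v) :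
    RowPeriodic φ 1 ∧ RowPeriodic φ x := by
  have hsq (n : ℤ) : y * z * (y * z) * (y * z) ^ n = (y * z) ^ (n + 2) := by
    rw [mul_assoc, mul_self_zpow, mul_self_zpow, add_assoc, one_add_one_eq_two]
  refine ⟨fun n => ?_, fun n => ?_⟩
  · simpa only [one_mul, hsq] using hX _ ⟨n, Or.inl rfl⟩
  · have h := hX _ ⟨-(n + 2), Or.inr rfl⟩
    rw [← mul_assoc, hsq, show -(n + 2) + 2 = -n by ring] at h
    simp only [x_mul_yz_zpow]
    exact h.symm

lemma rowPeriodic_mul_gen (hφ : IsPerfectColoring φ A) {g : G}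
    (h : RowPeriodic φ g ∧ RowPeriodic φ (g * x)) (i : Fin 3) :
    RowPeriodic φ (g * gen i) ∧ RowPeriodic φ (g * gen i * x) := by
  obtain ⟨h, hx⟩ := h
  have hy : RowPeriodic φ (g * y) := h.mul_y hφ hx
  have hyx : RowPeriodic φ (g * y * x) :=
    hy.mul_x hφ (by rwa [mul_assoc, y_mul_y, mul_one])
  fin_cases i
  · change RowPeriodic φ (g * x) ∧ RowPeriodic φ (g * x * x)
    rw [mul_assoc, x_mul_x, mul_one]
    exact ⟨hx, h⟩
  · exact ⟨hy, hyx⟩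
  · change RowPeriodic φ (g * z) ∧ RowPeriodic φ (g * z * x)
    have hz : g * z = g * y * (y * z) ^ (1 : ℤ) := by rw [zpow_one, mul_assoc, y_mul_y_mul]
    have hzx : g * z * x = g * y * x * (y * z) ^ (-1 : ℤ) := by
      rw [hz, mul_assoc _ x, x_mul_yz_zpow, neg_neg, mul_assoc, mul_assoc]
    exact ⟨hz ▸ hy.mul_yz_zpow 1, hzx ▸ hyx.mul_yz_zpow (-1)⟩

lemma rowPeriodic_of_isPerfectColoring (hφ : IsPerfectColoring φ A)
    (hX : ∀ v ∈ Xline, φ ((y * z) * (y * z) * v) = φ v) (g : G) : RowPeriodic φ g := by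
  suffices RowPeriodic φ g ∧ RowPeriodic φ (g * x) from this.1
  induction g using mul_gen_induction with
  | one => simpa only [one_mul] using rowPeriodic_one hX
  | mul_gen g i ih => exact rowPeriodic_mul_gen hφ ih i

end Coloring

lemma pair_yz_mul_eq {α : Type*} {χ : G → α} (hper : ∀ v, RowPeriodic χ v) (w : G) :
    ({χ (y * z * w * y), χ (y * z * w * z)} : Multiset α) = {χ (w * y), χ (w * z)} := by
  have hsq (v : G) : χ (v * (y * z) ^ (2 : ℤ)) = χ v := by simpa using (hper v).add_two_eq 0
  rcases yz_mul_eq w with h | h <;> rw [h]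
  · have hy : w * (y * z) * y * (y * z) ^ (2 : ℤ) = w * z := by
      simp only [zpow_two, mul_assoc, y_mul_y_mul, z_mul_z_mul]
    have hz : w * (y * z) * z = w * y := by simp only [mul_assoc, z_mul_z, mul_one]
    rw [← hsq (w * (y * z) * y), hy, hz, Multiset.pair_comm]
  · have hy : w * (y * z)⁻¹ * y = w * z := by
      simp only [mul_inv_rev, y_inv, z_inv, mul_assoc, y_mul_y, mul_one]
    have hz : w * (y * z)⁻¹ * z = w * y * (y * z) ^ (2 : ℤ) := by
      simp only [zpow_two, mul_inv_rev, y_inv, z_inv, mul_assoc, y_mul_y_mul]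
    rw [hy, hz, hsq, Multiset.pair_comm]

/-- Shifting a `(y·z)²`-periodic perfect coloring by `y·z` on a left coset `u·X` yields
another perfect coloring with the same parameter matrix. -/
theorem shifted_coloring_is_perfect {k : ℕ} (φ : G → Fin k) (A : Matrix (Fin k) (Fin k) ℕ)
    (hφ : IsPerfectColoring φ A)
    (hX : ∀ v ∈ Xline, φ ((y * z) * (y * z) * v) = φ v)
    (u : G) (ψ : G → Fin k)
    (hin : ∀ v ∈ (fun t => u * t) '' Xline, ψ v = φ ((y * z) * v))
    (hout : ∀ v ∉ (fun t => u * t) '' Xline, ψ v = φ v) :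
    IsPerfectColoring ψ A := by
  have hper := rowPeriodic_of_isPerfectColoring hφ hX
  refine hφ.of_neighborColors fun w => ?_
  have hwx := mul_mem_image_mul_xline_iff (u := u) (w := w) x_mem_xlineSubgroup
  have hwz := mul_z_mem_image_mul_xline_iff (u := u) (w := w)
  by_cases hw : w ∈ (fun t => u * t) '' Xline
  · have hwy := mul_y_not_mem_image_mul_xline hw
    refine ⟨y * z * w, hin w hw, ?_⟩
    rw [neighborColors, neighborColors, hin _ (hwx.mpr hw), hout _ hwy, hout _ (hwz.not.mpr hwy),
      ← pair_yz_mul_eq hper w]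
    simp only [mul_assoc]
  · refine ⟨w, hout w hw, ?_⟩
    rw [neighborColors, neighborColors, hout _ (hwx.not.mpr hw)]
    by_cases hwy : w * y ∈ (fun t => u * t) '' Xline
    · rw [hin _ hwy, hin _ (hwz.mpr hwy), ← pair_yz_mul_eq hper w]
      simp only [mul_assoc]
    · rw [hout _ hwy, hout _ (hwz.not.mpr hwy)]

end HexGrid
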